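/- arXiv:1511.01050 — 3 statements merged into one kernel-verified Lean document; each statement's English description precedes it below -/
import Mathlib

section
/- The fractional chromatic number is multiplicative under the disjunctive graph product: χ_f(Γ₁ * Γ₂) = χ_f(Γ₁) · χ_f(Γ₂) for finite simple graphs Γ₁, Γ₂. -/
/-- A `b`-fold coloring of `Γ` with `k` colors: each vertex gets a `b`-element set of
colors, adjacent vertices get disjoint sets. -/
def IsNFoldColoring {V : Type*} (Γ : SimpleGraph V) (b k : ℕ)
    (c : V → Finset (Fin k)) : Prop :=
  (∀ v, (c v).card = b) ∧ ∀ u v, Γ.Adj u v → Disjoint (c u) (c v)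

/-- The `b`-fold chromatic number `χ^(b)(Γ)`. -/
noncomputable def nfoldChromaticNumber {V : Type*} (Γ : SimpleGraph V) (b : ℕ) : ℕ :=
  sInf {k | ∃ c : V → Finset (Fin k), IsNFoldColoring Γ b k c}

/-- The fractional chromatic number `χ_f(Γ) = inf_b χ^(b)(Γ)/b`. -/
noncomputable def fracChromaticNumber {V : Type*} (Γ : SimpleGraph V) : ℝ :=
  ⨅ b : ℕ+, (nfoldChromaticNumber Γ b : ℝ) / (b : ℝ)

/-- `s` is an independent set of `Γ`. -/
def IsIndepFinset {V : Type*} (Γ : SimpleGraph V) (s : Finset V) : Prop :=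
  ∀ u ∈ s, ∀ v ∈ s, ¬ Γ.Adj u v

/-- The independence number `α(Γ)`. -/
noncomputable def indepNum {V : Type*} [Fintype V] (Γ : SimpleGraph V) : ℕ :=
  sSup {k | ∃ s : Finset V, s.card = k ∧ IsIndepFinset Γ s}

/-- `Γ` is vertex transitive. -/
def IsVertexTransitive {V : Type*} (Γ : SimpleGraph V) : Prop :=
  ∀ u v : V, ∃ σ : Γ ≃g Γ, σ u = v

/-- The confusion graph `Γ_t(G)` of the directed graph `G` on `[n]` with edge
relation `E` (an edge `i → j` means `E i j`), for the integer tuple `t`.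
Vertices are tuples `x` with `x i ∈ {0,1}^{t i}`; two tuples are adjacent iff
they are confusable at some node `j`. -/
def confusionGraph (n : ℕ) (E : Fin n → Fin n → Prop) (t : Fin n → ℕ) :
    SimpleGraph ((i : Fin n) → Fin (t i) → Bool) where
  Adj x z := ∃ j, x j ≠ z j ∧ ∀ i, E i j → x i = z i
  symm := by
    constructor
    rintro x z ⟨j, hj, h⟩
    exact ⟨j, fun h' => hj h'.symm, fun i hi => (h i hi).symm⟩
  loopless := by
    constructor
    rintro x ⟨j, hj, -⟩
    exact hj rfl

/-- The disjunctive product of two simple graphs. -/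
def disjProd {V₁ V₂ : Type*} (Γ₁ : SimpleGraph V₁) (Γ₂ : SimpleGraph V₂) :
    SimpleGraph (V₁ × V₂) where
  Adj u v := Γ₁.Adj u.1 v.1 ∨ Γ₂.Adj u.2 v.2
  symm := by constructor; rintro u v (h | h); exacts [Or.inl h.symm, Or.inr h.symm]
  loopless := by constructor; rintro u (h | h) <;> exact h.ne rfl

/-! The upper bound comes from product colourings: if `c₁` and `c₂` are `b₁`- and `b₂`-fold
colourings, then `(u, v) ↦ c₁ u ×ˢ c₂ v` is a `b₁ b₂`-fold colouring of the disjunctive product.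

For the lower bound, take a `b`-fold colouring `c` of `Γ₁ * Γ₂` with `k` colours. For each `v`,
the slice `u ↦ c (u, v)` is a `b`-fold colouring of `Γ₁`, so at least `m = χ^(b)(Γ₁)` colours
occur above `v`; keeping `m` of them for every `v` gives an `m`-fold colouring of `Γ₂` with `k`
colours, since a colour kept above both ends of an edge `v v'` of `Γ₂` would be shared by two
adjacent vertices `(u, v)`, `(u', v')` of the product. Hence
`χ^(b)(Γ₁ * Γ₂) ≥ χ^(m)(Γ₂) ≥ m χ_f(Γ₂) ≥ b χ_f(Γ₁) χ_f(Γ₂)`, and no LP duality is needed. -/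

open Finset

section NFold

variable {V : Type*} {Γ : SimpleGraph V} {b k : ℕ} {c : V → Finset (Fin k)}

theorem IsNFoldColoring.nfoldChromaticNumber_le (hc : IsNFoldColoring Γ b k c) :
    nfoldChromaticNumber Γ b ≤ k :=
  Nat.sInf_le ⟨c, hc⟩

theorem IsNFoldColoring.nfoldChromaticNumber_le_card {A : Finset (Fin k)}
    (hc : IsNFoldColoring Γ b k c) (hA : ∀ v, c v ⊆ A) :
    nfoldChromaticNumber Γ b ≤ #A := by
  let e := A.equivFin.toEmbedding
  refine IsNFoldColoring.nfoldChromaticNumber_le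
    (c := fun v => ((c v).subtype (· ∈ A)).map e) ⟨fun v => ?_, fun u v huv => ?_⟩
  · rw [card_map, card_subtype, filter_true_of_mem (hA v), hc.1 v]
  · rw [disjoint_map, disjoint_left]
    intro α hαu hαv
    exact disjoint_left.mp (hc.2 u v huv) (mem_subtype.mp hαu) (mem_subtype.mp hαv)

theorem IsNFoldColoring.disjProd {V' : Type*} {Γ' : SimpleGraph V'} {b' k' : ℕ}
    {c' : V' → Finset (Fin k')} (hc : IsNFoldColoring Γ b k c)
    (hc' : IsNFoldColoring Γ' b' k' c') :
    IsNFoldColoring (disjProd Γ Γ') (b * b') (k * k')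
      (fun p => (c p.1 ×ˢ c' p.2).map finProdFinEquiv.toEmbedding) := by
  refine ⟨fun p => ?_, fun p q hpq => ?_⟩
  · rw [card_map, card_product, hc.1, hc'.1]
  · rw [disjoint_map, disjoint_product]
    exact hpq.imp (hc.2 _ _) (hc'.2 _ _)

variable [Fintype V]

theorem exists_isNFoldColoring (Γ : SimpleGraph V) (b : ℕ) :
    ∃ k, ∃ c : V → Finset (Fin k), IsNFoldColoring Γ b k c := by
  let e := (Fintype.equivFin (V × Fin b)).toEmbedding
  refine ⟨_, fun v => ({v} ×ˢ univ).map e, fun v => ?_, fun u v huv => ?_⟩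
  · simp
  · rw [disjoint_map, disjoint_product]
    exact Or.inl (disjoint_singleton.mpr huv.ne)

theorem exists_isNFoldColoring_nfoldChromaticNumber (Γ : SimpleGraph V) (b : ℕ) :
    ∃ c : V → Finset (Fin (nfoldChromaticNumber Γ b)),
      IsNFoldColoring Γ b (nfoldChromaticNumber Γ b) c :=
  Nat.sInf_mem (exists_isNFoldColoring Γ b)

end NFold

section Fractional

variable {V : Type*} (Γ : SimpleGraph V)

theorem fracChromaticNumber_nonneg : 0 ≤ fracChromaticNumber Γ :=
  Real.iInf_nonneg fun _ => by positivity

theorem fracChromaticNumber_le_div (b : ℕ+) :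
    fracChromaticNumber Γ ≤ nfoldChromaticNumber Γ b / b :=
  ciInf_le ⟨0, by rintro _ ⟨b, rfl⟩; positivity⟩ b

theorem mul_fracChromaticNumber_le (b : ℕ) :
    b * fracChromaticNumber Γ ≤ nfoldChromaticNumber Γ b := by
  rcases b.eq_zero_or_pos with rfl | hb
  · simp
  · have := fracChromaticNumber_le_div Γ ⟨b, hb⟩
    rwa [le_div_iff₀' (by positivity)] at this

end Fractional

section DisjProd

variable {V₁ V₂ : Type*} [Fintype V₁] [Fintype V₂] (Γ₁ : SimpleGraph V₁) (Γ₂ : SimpleGraph V₂)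

theorem nfoldChromaticNumber_disjProd_le (b₁ b₂ : ℕ) :
    nfoldChromaticNumber (disjProd Γ₁ Γ₂) (b₁ * b₂) ≤
      nfoldChromaticNumber Γ₁ b₁ * nfoldChromaticNumber Γ₂ b₂ := by
  obtain ⟨c₁, hc₁⟩ := exists_isNFoldColoring_nfoldChromaticNumber Γ₁ b₁
  obtain ⟨c₂, hc₂⟩ := exists_isNFoldColoring_nfoldChromaticNumber Γ₂ b₂
  exact (hc₁.disjProd hc₂).nfoldChromaticNumber_le

theorem nfoldChromaticNumber_nfoldChromaticNumber_le_disjProd (b : ℕ) :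
    nfoldChromaticNumber Γ₂ (nfoldChromaticNumber Γ₁ b) ≤
      nfoldChromaticNumber (disjProd Γ₁ Γ₂) b := by
  obtain ⟨c, hc⟩ := exists_isNFoldColoring_nfoldChromaticNumber (disjProd Γ₁ Γ₂) b
  let A v := univ.biUnion fun u => c (u, v)
  have hfibre : ∀ v, nfoldChromaticNumber Γ₁ b ≤ #(A v) := fun v =>
    IsNFoldColoring.nfoldChromaticNumber_le_card (c := fun u => c (u, v))
      ⟨fun u => hc.1 _, fun u u' huu' => hc.2 _ _ (Or.inl huu')⟩
      fun u => subset_biUnion_of_mem (fun u => c (u, v)) (mem_univ u)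
  choose d hdA hd using fun v => exists_subset_card_eq (hfibre v)
  refine IsNFoldColoring.nfoldChromaticNumber_le (c := d) ⟨hd, fun v v' hvv' => ?_⟩
  rw [disjoint_left]
  intro α hα hα'
  obtain ⟨u, -, hu⟩ := mem_biUnion.mp (hdA v hα)
  obtain ⟨u', -, hu'⟩ := mem_biUnion.mp (hdA v' hα')
  exact disjoint_left.mp (hc.2 (u, v) (u', v') (Or.inr hvv')) hu hu'

theorem fracChromaticNumber_disjProd_le :
    fracChromaticNumber (disjProd Γ₁ Γ₂) ≤ fracChromaticNumber Γ₁ * fracChromaticNumber Γ₂ := by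
  rw [fracChromaticNumber.eq_1 Γ₁, Real.iInf_mul_of_nonneg (fracChromaticNumber_nonneg Γ₂)]
  refine le_ciInf fun b₁ => ?_
  rw [fracChromaticNumber.eq_1 Γ₂, Real.mul_iInf_of_nonneg (by positivity)]
  refine le_ciInf fun b₂ => ?_
  calc fracChromaticNumber (disjProd Γ₁ Γ₂)
      ≤ nfoldChromaticNumber (disjProd Γ₁ Γ₂) (b₁ * b₂ : ℕ+) / (b₁ * b₂ : ℕ+) :=
        fracChromaticNumber_le_div _ _
    _ ≤ (nfoldChromaticNumber Γ₁ b₁ * nfoldChromaticNumber Γ₂ b₂ : ℕ) / (b₁ * b₂ : ℕ+) := by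
        gcongr
        exact_mod_cast nfoldChromaticNumber_disjProd_le Γ₁ Γ₂ b₁ b₂
    _ = nfoldChromaticNumber Γ₁ b₁ / b₁ * (nfoldChromaticNumber Γ₂ b₂ / b₂) := by
        push_cast
        ring

theorem mul_fracChromaticNumber_le_disjProd :
    fracChromaticNumber Γ₁ * fracChromaticNumber Γ₂ ≤ fracChromaticNumber (disjProd Γ₁ Γ₂) := by
  refine le_ciInf fun b => ?_
  rw [le_div_iff₀ (by positivity)]
  calc fracChromaticNumber Γ₁ * fracChromaticNumber Γ₂ * b
      = (b * fracChromaticNumber Γ₁) * fracChromaticNumber Γ₂ := by ring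
    _ ≤ nfoldChromaticNumber Γ₁ b * fracChromaticNumber Γ₂ := by
        gcongr
        · exact fracChromaticNumber_nonneg Γ₂
        · exact mul_fracChromaticNumber_le Γ₁ b
    _ ≤ nfoldChromaticNumber Γ₂ (nfoldChromaticNumber Γ₁ b) :=
        mul_fracChromaticNumber_le Γ₂ _
    _ ≤ nfoldChromaticNumber (disjProd Γ₁ Γ₂) b := by
        exact_mod_cast nfoldChromaticNumber_nfoldChromaticNumber_le_disjProd Γ₁ Γ₂ b

end DisjProd

theorem fracChromaticNumber_disjProd {V₁ V₂ : Type*} [Fintype V₁] [Fintype V₂]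
    (Γ₁ : SimpleGraph V₁) (Γ₂ : SimpleGraph V₂) :
    fracChromaticNumber (disjProd Γ₁ Γ₂) = fracChromaticNumber Γ₁ * fracChromaticNumber Γ₂ :=
  (fracChromaticNumber_disjProd_le Γ₁ Γ₂).antisymm (mul_fracChromaticNumber_le_disjProd Γ₁ Γ₂)
end

section
/- Independence-number monotonicity for confusion graphs: if s ≤ t componentwise with s_j + k = t_j for one coordinate j and s_i = t_i otherwise, then α(Γ_t(G)) ≤ 2^k · α(Γ_s(G)). -/
/-!
Fix the last `k` bits of coordinate `j`. Among vertices of `Γ_t(G)` sharing these bits, two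
words at a node coincide iff their truncations to length `s` do; so truncation to `Γ_s(G)` is
injective on each of the `2 ^ k` classes and reflects adjacency, turning each class of an
independent set of `Γ_t(G)` into an independent set of `Γ_s(G)` of the same size.
-/

section IndepNum

variable {V W : Type*} [Fintype W] {Γ : SimpleGraph V} {Γ' : SimpleGraph W}

theorem IsIndepFinset.mono {S T : Finset V} (hT : IsIndepFinset Γ T) (hST : S ⊆ T) :
    IsIndepFinset Γ S :=
  fun x hx z hz => hT x (hST hx) z (hST hz)

theorem IsIndepFinset.card_le_indepNum {S : Finset W} (hS : IsIndepFinset Γ' S) :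
    S.card ≤ indepNum Γ' :=
  le_csSup ⟨Fintype.card W, by rintro m ⟨S, rfl, -⟩; exact S.card_le_univ⟩ ⟨S, rfl, hS⟩

theorem indepNum_le_of_forall [Fintype V] {m : ℕ}
    (h : ∀ S : Finset V, IsIndepFinset Γ S → S.card ≤ m) : indepNum Γ ≤ m :=
  csSup_le ⟨0, ∅, rfl, by simp [IsIndepFinset]⟩ (by rintro _ ⟨S, rfl, hS⟩; exact h S hS)

theorem IsIndepFinset.card_le_indepNum_of_injOn {S : Finset V} (hS : IsIndepFinset Γ S)
    (f : V → W) (hinj : Set.InjOn f S)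
    (hadj : ∀ x ∈ S, ∀ z ∈ S, Γ'.Adj (f x) (f z) → Γ.Adj x z) :
    S.card ≤ indepNum Γ' := by
  classical
  rw [← Finset.card_image_of_injOn hinj]
  refine IsIndepFinset.card_le_indepNum ?_
  simp only [IsIndepFinset, Finset.mem_image]
  rintro _ ⟨x, hx, rfl⟩ _ ⟨z, hz, rfl⟩ h
  exact hS x hx z hz (hadj x hx z hz h)

end IndepNum

section Truncate

variable {n : ℕ} {s t : Fin n → ℕ} {α : Type*}

def truncate (hst : ∀ i, s i ≤ t i) (x : (i : Fin n) → Fin (t i) → α) :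
    (i : Fin n) → Fin (s i) → α :=
  fun i a => x i (Fin.castLE (hst i) a)

theorem eq_of_truncate_apply_eq {hst : ∀ i, s i ≤ t i} {x z : (i : Fin n) → Fin (t i) → α}
    {i : Fin n} (hagree : ∀ a : Fin (t i), s i ≤ a → x i a = z i a)
    (h : truncate hst x i = truncate hst z i) : x i = z i := by
  funext a
  by_cases ha : (a : ℕ) < s i
  · exact congrFun h ⟨a, ha⟩
  · exact hagree a (not_lt.mp ha)

theorem eq_of_truncate_eq {hst : ∀ i, s i ≤ t i} {x z : (i : Fin n) → Fin (t i) → α}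
    (hagree : ∀ i (a : Fin (t i)), s i ≤ a → x i a = z i a)
    (h : truncate hst x = truncate hst z) : x = z :=
  funext fun i => eq_of_truncate_apply_eq (hagree i) (congrFun h i)

theorem confusionGraph_adj_of_adj_truncate {E : Fin n → Fin n → Prop}
    {hst : ∀ i, s i ≤ t i} {x z : (i : Fin n) → Fin (t i) → Bool}
    (hagree : ∀ i (a : Fin (t i)), s i ≤ a → x i a = z i a)
    (h : (confusionGraph n E s).Adj (truncate hst x) (truncate hst z)) :
    (confusionGraph n E t).Adj x z := by
  obtain ⟨j, hne, hin⟩ := h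
  exact ⟨j, fun hj => hne (by unfold truncate; rw [hj]),
    fun i hi => eq_of_truncate_apply_eq (hagree i) (hin i hi)⟩

end Truncate

section Tail

variable {n : ℕ} {s t : Fin n → ℕ} {j : Fin n} {k : ℕ} {α : Type*}

def tailBits (hj : s j + k = t j) (x : (i : Fin n) → Fin (t i) → α) : Fin k → α :=
  fun m => x j ⟨s j + m, by omega⟩

theorem agree_of_tailBits_eq {hj : s j + k = t j} (hne : ∀ i, i ≠ j → s i = t i)
    {x z : (i : Fin n) → Fin (t i) → α} (h : tailBits hj x = tailBits hj z) :
    ∀ i (a : Fin (t i)), s i ≤ a → x i a = z i a := by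
  intro i a ha
  by_cases hi : i = j
  · subst hi
    have ha' : (⟨s i + (a - s i), by omega⟩ : Fin (t i)) = a := Fin.ext (by simp only; omega)
    simpa only [tailBits, ha'] using congrFun h ⟨a - s i, by omega⟩
  · have := hne i hi
    omega

end Tail

theorem confusionGraph_indepNum_le (n : ℕ) (E : Fin n → Fin n → Prop)
    (s t : Fin n → ℕ) (j : Fin n) (k : ℕ)
    (hj : s j + k = t j) (hne : ∀ i, i ≠ j → s i = t i) :
    indepNum (confusionGraph n E t) ≤ 2 ^ k * indepNum (confusionGraph n E s) := by
  have hst : ∀ i, s i ≤ t i := fun i => by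
    by_cases hi : i = j
    · subst hi; omega
    · exact (hne i hi).le
  refine indepNum_le_of_forall fun S hS => ?_
  have hfiber : ∀ e ∈ (Finset.univ : Finset (Fin k → Bool)),
      (S.filter (tailBits hj · = e)).card ≤ indepNum (confusionGraph n E s) := by
    intro e _
    have hagree : ∀ x ∈ S.filter (tailBits hj · = e), ∀ z ∈ S.filter (tailBits hj · = e),
        ∀ i (a : Fin (t i)), s i ≤ a → x i a = z i a := by
      simp only [Finset.mem_filter]
      exact fun x hx z hz => agree_of_tailBits_eq hne (hx.2.trans hz.2.symm)
    exact (hS.mono (Finset.filter_subset _ S)).card_le_indepNum_of_injOn (truncate hst)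
      (fun x hx z hz => eq_of_truncate_eq (hagree x hx z hz))
      (fun x hx z hz => confusionGraph_adj_of_adj_truncate (hagree x hx z hz))
  calc S.card ≤ indepNum (confusionGraph n E s) * (Finset.univ : Finset (Fin k → Bool)).card :=
        Finset.card_le_mul_card_image_of_maps_to (fun _ _ => Finset.mem_univ _) _ hfiber
    _ = 2 ^ k * indepNum (confusionGraph n E s) := by simp [mul_comm]
end

section
/- A rate tuple (R'₁,…,R'_n) is achievable for the locally recoverable distributed storage problem on directed graph G if and only if there exists a nonnegative integer tuple t = (t₁,…,t_n) such that R'_j ≥ t_j / ⌊log₂ α(Γ_t(G))⌋ for all j ∈ [n]. -/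
/-- A `(t₁, …, t_n, r)` distributed storage code exists for the directed graph on
`[n]` with edge relation `E`: an injective encoder of `2^r` messages into server
contents, together with recovery functions, one per server, each depending only on
the contents of the in-neighborhood and recovering the content of that server on
every codeword. -/
def StorageCodeExists (n : ℕ) (E : Fin n → Fin n → Prop) (t : Fin n → ℕ) (r : ℕ) : Prop :=
  ∃ enc : Fin (2 ^ r) → ((i : Fin n) → Fin (t i) → Bool),
    Function.Injective enc ∧
    ∃ f : ∀ j : Fin n, ((i : Fin n) → Fin (t i) → Bool) → (Fin (t j) → Bool),
      (∀ j x y, (∀ i, E i j → x i = y i) → f j x = f j y) ∧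
      (∀ m j, f j (enc m) = enc m j)

/-- A rate tuple is achievable for the distributed storage problem `G`. -/
def DSAchievable (n : ℕ) (E : Fin n → Fin n → Prop) (R : Fin n → ℝ) : Prop :=
  ∃ (t : Fin n → ℕ) (r : ℕ), 0 < r ∧ StorageCodeExists n E t r ∧
    ∀ j, (t j : ℝ) / (r : ℝ) ≤ R j


/-!
A storage code is the same thing as a codebook of `2 ^ r` tuples that are pairwise not
confusable, i.e. an independent set of the confusion graph: recovery functions force
non-confusability, and conversely on an independent codebook the in-neighbourhood contents of
a node determine the codeword, hence its content at that node. So a `(t, r)` code exists iff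
`2 ^ r ≤ α(Γ_t(G))`, i.e. iff `r ≤ ⌊log₂ α(Γ_t(G))⌋`, and the best rate tuple for a given `t` is
obtained with `r = ⌊log₂ α(Γ_t(G))⌋`.
-/

open Finset

section IndepNum

variable {V : Type*} {Γ : SimpleGraph V}

theorem IsIndepFinset.mono_s11 {s s' : Finset V} (hs : IsIndepFinset Γ s) (h : s' ⊆ s) :
    IsIndepFinset Γ s' :=
  fun u hu v hv => hs u (h hu) v (h hv)

variable [Fintype V]

theorem bddAbove_card_isIndepFinset :
    BddAbove {k | ∃ s : Finset V, s.card = k ∧ IsIndepFinset Γ s} :=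
  ⟨Fintype.card V, by rintro k ⟨s, rfl, -⟩; exact s.card_le_univ⟩

theorem exists_isIndepFinset_card_eq_indepNum :
    ∃ s : Finset V, s.card = indepNum Γ ∧ IsIndepFinset Γ s :=
  Nat.sSup_mem (s := {k | ∃ s : Finset V, s.card = k ∧ IsIndepFinset Γ s})
    ⟨0, ∅, rfl, fun _ h => absurd h (notMem_empty _)⟩ bddAbove_card_isIndepFinset

theorem le_indepNum_iff {k : ℕ} :
    k ≤ indepNum Γ ↔ ∃ s : Finset V, s.card = k ∧ IsIndepFinset Γ s := by
  refine ⟨fun hk => ?_, fun hs => le_csSup bddAbove_card_isIndepFinset hs⟩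
  obtain ⟨s, hcard, hs⟩ := exists_isIndepFinset_card_eq_indepNum (Γ := Γ)
  obtain ⟨s', hs's, hcard'⟩ := exists_subset_card_eq (hcard ▸ hk)
  exact ⟨s', hcard', hs.mono_s11 hs's⟩

end IndepNum

section StorageCode

variable {n : ℕ} {E : Fin n → Fin n → Prop} {t : Fin n → ℕ}

abbrev ServerContents (t : Fin n → ℕ) : Type := (i : Fin n) → Fin (t i) → Bool

theorem isIndepFinset_of_recovery {s : Finset (ServerContents t)}
    (f : ∀ j, ServerContents t → Fin (t j) → Bool)
    (hf : ∀ j x y, (∀ i, E i j → x i = y i) → f j x = f j y)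
    (hrec : ∀ c ∈ s, ∀ j, f j c = c j) :
    IsIndepFinset (confusionGraph n E t) s := by
  rintro x hx z hz ⟨j, hne, hagree⟩
  exact hne (by rw [← hrec x hx j, ← hrec z hz j, hf j x z hagree])

open Classical in
/-- Taking only the in-neighbourhood contents as argument makes the recovery function built from
it local for free. -/
noncomputable def decodeAt (s : Finset (ServerContents t)) (j : Fin n)
    (w : ∀ i, E i j → Fin (t i) → Bool) : Fin (t j) → Bool :=
  if h : ∃ c ∈ s, ∀ i hi, c i = w i hi then h.choose j else fun _ => false

theorem decodeAt_eq {s : Finset (ServerContents t)} (hs : IsIndepFinset (confusionGraph n E t) s)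
    {c : ServerContents t} (hc : c ∈ s) (j : Fin n) :
    decodeAt s j (fun i (_ : E i j) => c i) = c j := by
  have h : ∃ c' ∈ s, ∀ i (_ : E i j), c' i = c i := ⟨c, hc, fun _ _ => rfl⟩
  rw [decodeAt, dif_pos h]
  obtain ⟨hc', hagree⟩ := h.choose_spec
  by_contra hne
  exact hs _ hc' _ hc ⟨j, hne, hagree⟩

theorem storageCodeExists_iff {r : ℕ} :
    StorageCodeExists n E t r ↔ 2 ^ r ≤ indepNum (confusionGraph n E t) := by
  classical
  rw [le_indepNum_iff]
  constructor
  · rintro ⟨enc, hinj, f, hf, hrec⟩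
    refine ⟨univ.image enc, by rw [card_image_of_injective _ hinj, card_univ, Fintype.card_fin],
      isIndepFinset_of_recovery f hf ?_⟩
    simpa only [mem_image, mem_univ, true_and, forall_exists_index, forall_apply_eq_imp_iff]
      using hrec
  · rintro ⟨s, hcard, hs⟩
    let e : s ≃ Fin (2 ^ r) := Fintype.equivFinOfCardEq (by rw [Fintype.card_coe, hcard])
    refine ⟨fun m => e.symm m, Subtype.val_injective.comp e.symm.injective,
      fun j x => decodeAt s j (fun i _ => x i), fun j x y hxy => ?_,
      fun m j => decodeAt_eq hs (e.symm m).2 j⟩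
    simp only [funext₂ hxy]

end StorageCode

theorem dsAchievable_iff (n : ℕ) (E : Fin n → Fin n → Prop) (R : Fin n → ℝ) :
    DSAchievable n E R ↔
      ∃ t : Fin n → ℕ, 0 < Nat.log 2 (indepNum (confusionGraph n E t)) ∧
        ∀ j, (t j : ℝ) / (Nat.log 2 (indepNum (confusionGraph n E t)) : ℝ) ≤ R j := by
  constructor
  · rintro ⟨t, r, hr, hcode, hR⟩
    have hrL : r ≤ Nat.log 2 (indepNum (confusionGraph n E t)) :=
      Nat.le_log_of_pow_le one_lt_two (storageCodeExists_iff.1 hcode)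
    refine ⟨t, hr.trans_le hrL, fun j => le_trans ?_ (hR j)⟩
    gcongr
  · rintro ⟨t, hL, hR⟩
    have hα : indepNum (confusionGraph n E t) ≠ 0 := fun h => by simp [h] at hL
    exact ⟨t, _, hL, storageCodeExists_iff.2 (Nat.pow_log_le_self 2 hα), hR⟩
end
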